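/- arXiv:2005.04484 — 4 statements merged into one kernel-verified Lean document; each statement's English description precedes it below -/
import Mathlib

section
/- Let M be a compact connected Riemannian manifold and L a family of smooth vector fields on M. Then the following are equivalent: (1) L is globally hypoelliptic in M; (2) the real span of L is globally hypoelliptic in M; (3) the Lie algebra generated by L is globally hypoelliptic in M. -/
/-!
If every `X ∈ L` maps `C` into itself and `X u ∈ C` for all `X ∈ L`, then every `X ∈ L` maps
`C ⊔ ℝ u` into `C`. Endomorphisms mapping a submodule into a smaller one are closed under
composition, hence under commutators, so the whole Lie algebra generated by `L` (and a fortiori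
its span) maps `u` into `C`.
-/

/-- Global hypoellipticity of a family `S` of operators (vector fields acting on the space
`V` of distributions on a compact manifold `M`): any distribution `u` with `X u` smooth for
all `X ∈ S` is itself smooth.  `C` is the subspace of smooth distributions. -/
def IsGloballyHypoelliptic {V : Type*} [AddCommGroup V] [Module ℝ V]
    (C : Submodule ℝ V) (S : Set (Module.End ℝ V)) : Prop :=
  ∀ u : V, (∀ X ∈ S, X u ∈ C) → u ∈ C

attribute [local instance] LieRing.ofAssociativeRing

namespace Submodule

variable {R V : Type*} [CommRing R] [AddCommGroup V] [Module R V]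

def mapsIntoLieSubalgebra {N P : Submodule R V} (hPN : P ≤ N) :
    LieSubalgebra R (Module.End R V) where
  carrier := {X | N ≤ P.comap X}
  add_mem' hX hY v hv := P.add_mem (hX hv) (hY hv)
  zero_mem' _ _ := P.zero_mem
  smul_mem' c _ hX v hv := P.smul_mem c (hX hv)
  lie_mem' {X Y} hX hY v hv := by
    rw [mem_comap, Ring.lie_def, LinearMap.sub_apply, Module.End.mul_apply,
      Module.End.mul_apply]
    exact P.sub_mem (hX (hPN (hY hv))) (hY (hPN (hX hv)))

@[simp]
theorem mem_mapsIntoLieSubalgebra {N P : Submodule R V} (hPN : P ≤ N) {X : Module.End R V} :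
    X ∈ mapsIntoLieSubalgebra hPN ↔ N ≤ P.comap X :=
  Iff.rfl

theorem lieSpan_apply_mem {C : Submodule R V} {L : Set (Module.End R V)}
    (hstable : ∀ X ∈ L, ∀ v ∈ C, X v ∈ C) {u : V} (hu : ∀ X ∈ L, X u ∈ C) :
    ∀ X ∈ LieSubalgebra.lieSpan R (Module.End R V) L, X u ∈ C := by
  have hL : L ⊆ mapsIntoLieSubalgebra (le_sup_left : C ≤ C ⊔ R ∙ u) := fun X hX =>
    (mem_mapsIntoLieSubalgebra _).mpr <|
      sup_le (fun v hv => hstable X hX v hv) ((span_singleton_le_iff_mem _ _).mpr (hu X hX))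
  intro X hX
  have hX' := (mem_mapsIntoLieSubalgebra _).mp (LieSubalgebra.lieSpan_le.mpr hL hX)
  exact hX' (mem_sup_right (mem_span_singleton_self u))

end Submodule

namespace IsGloballyHypoelliptic

variable {V : Type*} [AddCommGroup V] [Module ℝ V] {C : Submodule ℝ V}

theorem mono {S T : Set (Module.End ℝ V)} (h : IsGloballyHypoelliptic C S) (hST : S ⊆ T) :
    IsGloballyHypoelliptic C T :=
  fun u hu => h u fun X hX => hu X (hST hX)

theorem of_subset_lieSpan {L S : Set (Module.End ℝ V)} (hstable : ∀ X ∈ L, ∀ v ∈ C, X v ∈ C)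
    (hS : S ⊆ LieSubalgebra.lieSpan ℝ (Module.End ℝ V) L) (h : IsGloballyHypoelliptic C S) :
    IsGloballyHypoelliptic C L :=
  fun u hu => h u fun X hX => Submodule.lieSpan_apply_mem hstable hu X (hS hX)

end IsGloballyHypoelliptic

theorem globally_hypoelliptic_span_lie_iff
    {V : Type*} [AddCommGroup V] [Module ℝ V]
    (C : Submodule ℝ V)
    (L : Set (Module.End ℝ V))
    (hstable : ∀ X ∈ L, ∀ u ∈ C, X u ∈ C) :
    (IsGloballyHypoelliptic C L ↔
      IsGloballyHypoelliptic C (Submodule.span ℝ L : Set (Module.End ℝ V))) ∧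
    (IsGloballyHypoelliptic C L ↔
      IsGloballyHypoelliptic C
        (LieSubalgebra.lieSpan ℝ (Module.End ℝ V) L : Set (Module.End ℝ V))) :=
  ⟨⟨fun h => h.mono Submodule.subset_span,
      IsGloballyHypoelliptic.of_subset_lieSpan hstable LieSubalgebra.submodule_span_le_lieSpan⟩,
    ⟨fun h => h.mono LieSubalgebra.subset_lieSpan,
      IsGloballyHypoelliptic.of_subset_lieSpan hstable subset_rfl⟩⟩
end

section
/- For every ε > 0 and n ≥ 1 there exists a constant C₁ > 0 (depending only on n and ε) such that for every open set B ⊂ U_ε = (−ε,ε)^n and every ψ ∈ C^∞(U_ε), one has m(B) ∫_{U_ε} |ψ|² dt ≤ C₁ ( ∫_B |ψ|² dt + ∑_{j=1}^n ∫_{U_ε} |∂ψ/∂t_j|² dt ), where m(B) denotes the Lebesgue measure of B. -/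
open MeasureTheory ENNReal Set

-- Cauchy-Schwarz for lintegral on measure ≤ 1
lemma aux_sq_lintegral_le {α : Type*} [MeasurableSpace α] (μ : Measure α) (hμ : μ Set.univ ≤ 1)
    {f : α → ℝ≥0∞} (hf : AEMeasurable f μ) :
    (∫⁻ x, f x ∂μ) ^ 2 ≤ ∫⁻ x, (f x) ^ 2 ∂μ := by
  have hpq : Real.HolderConjugate 2 2 := Real.HolderConjugate.two_two
  have h := ENNReal.lintegral_mul_le_Lp_mul_Lq μ hpq hf aemeasurable_const (g := fun _ => 1)
  simp only [Pi.mul_apply, mul_one, one_rpow, lintegral_const, one_mul] at h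
  have h2 : (∫⁻ x, f x ∂μ) ≤ (∫⁻ x, f x ^ (2:ℝ) ∂μ) ^ (1/(2:ℝ)) := by
    calc (∫⁻ x, f x ∂μ) ≤ (∫⁻ x, f x ^ (2:ℝ) ∂μ) ^ (1/(2:ℝ)) * (μ Set.univ) ^ (1/(2:ℝ)) := h
    _ ≤ (∫⁻ x, f x ^ (2:ℝ) ∂μ) ^ (1/(2:ℝ)) * 1 ^ (1/(2:ℝ)) := by
        gcongr
    _ = (∫⁻ x, f x ^ (2:ℝ) ∂μ) ^ (1/(2:ℝ)) := by simp
  calc (∫⁻ x, f x ∂μ) ^ 2 ≤ ((∫⁻ x, f x ^ (2:ℝ) ∂μ) ^ (1/(2:ℝ))) ^ 2 := by gcongr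
  _ = ∫⁻ x, f x ^ (2:ℝ) ∂μ := by
      rw [← ENNReal.rpow_natCast _ 2, ← ENNReal.rpow_mul]
      norm_num
  _ = ∫⁻ x, f x ^ 2 ∂μ := by
      congr 1; funext x; rw [← ENNReal.rpow_natCast (f x) 2]; norm_num

lemma aux_lintegral_comp_smul_add {n : ℕ} (H : (Fin n → ℝ) → ℝ≥0∞) (hH : Measurable H)
    {c : ℝ} (hc : (1:ℝ)/2 ≤ c) (hc1 : c ≤ 1) (v : Fin n → ℝ) :
    ∫⁻ b, H (c • b + v) ≤ 2 ^ n * ∫⁻ x, H x := by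
  have hc0 : (0:ℝ) < c := lt_of_lt_of_le (by norm_num) hc
  have hsm : Measurable (fun b : Fin n → ℝ => c • b) := measurable_id.const_smul c
  have hT : Measurable fun b : Fin n → ℝ => c • b + v := hsm.add_const v
  have hmap : Measure.map (fun b : Fin n → ℝ => c • b + v) volume
      = ENNReal.ofReal (|(c ^ n)⁻¹|) • volume := by
    have h1 : (fun b : Fin n → ℝ => c • b + v) = (fun x => x + v) ∘ (fun b => c • b) := rfl
    rw [h1, ← Measure.map_map (measurable_add_const v) hsm,
      Measure.map_addHaar_smul volume hc0.ne', Measure.map_smul,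
      map_add_right_eq_self volume v, Module.finrank_fin_fun]
  have hbound : ENNReal.ofReal (|(c ^ n)⁻¹|) ≤ 2 ^ n := by
    rw [abs_of_nonneg (by positivity)]
    have h2 : (c ^ n)⁻¹ ≤ (2:ℝ) ^ n := by
      rw [← inv_pow]
      have hci : c⁻¹ ≤ 2 := by rw [inv_le_comm₀ hc0 (by norm_num)]; linarith
      exact pow_le_pow_left₀ (by positivity) hci n
    calc ENNReal.ofReal ((c ^ n)⁻¹) ≤ ENNReal.ofReal (2 ^ n) :=
          ENNReal.ofReal_le_ofReal h2
      _ = 2 ^ n := by rw [ENNReal.ofReal_pow (by norm_num)]; norm_num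
  calc ∫⁻ b, H (c • b + v)
      = ∫⁻ x, H x ∂(Measure.map (fun b : Fin n → ℝ => c • b + v) volume) :=
        (lintegral_map hH hT).symm
    _ = ENNReal.ofReal (|(c ^ n)⁻¹|) * ∫⁻ x, H x := by rw [hmap, lintegral_smul_measure, smul_eq_mul]
    _ ≤ 2 ^ n * ∫⁻ x, H x := mul_le_mul_left hbound _

lemma aux_op_bound {n : ℕ} {ε : ℝ} (hε : 0 ≤ ε) (L : (Fin n → ℝ) →L[ℝ] ℂ) (v : Fin n → ℝ)
    (hv : ∀ j, |v j| ≤ 2 * ε) :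
    ‖L v‖ ^ 2 ≤ 4 * ε ^ 2 * n * ∑ j, ‖L (Pi.single j 1)‖ ^ 2 := by
  have hvsum : v = ∑ j, v j • (Pi.single j 1 : Fin n → ℝ) := by
    funext k
    simp [Finset.sum_apply, Pi.single_apply]
  have h1 : ‖L v‖ ≤ 2 * ε * ∑ j, ‖L (Pi.single j 1)‖ := by
    conv_lhs => rw [hvsum]
    rw [map_sum]
    refine (norm_sum_le _ _).trans ?_
    rw [Finset.mul_sum]
    refine Finset.sum_le_sum fun j _ => ?_
    rw [L.map_smul, norm_smul, Real.norm_eq_abs]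
    exact mul_le_mul_of_nonneg_right (hv j) (norm_nonneg _)
  have h2 : (∑ j, ‖L (Pi.single j 1)‖) ^ 2 ≤ n * ∑ j, ‖L (Pi.single j 1)‖ ^ 2 := by
    simpa using sq_sum_le_card_mul_sum_sq (s := (Finset.univ : Finset (Fin n)))
      (f := fun j => ‖L (Pi.single j 1)‖)
  have hsum_nonneg : (0:ℝ) ≤ ∑ j, ‖L (Pi.single j 1)‖ :=
    Finset.sum_nonneg fun j _ => norm_nonneg _
  calc ‖L v‖ ^ 2 ≤ (2 * ε * ∑ j, ‖L (Pi.single j 1)‖) ^ 2 :=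
        pow_le_pow_left₀ (norm_nonneg _) h1 2
    _ = 4 * ε ^ 2 * (∑ j, ‖L (Pi.single j 1)‖) ^ 2 := by ring
    _ ≤ 4 * ε ^ 2 * (n * ∑ j, ‖L (Pi.single j 1)‖ ^ 2) := by
        have h4 : (0:ℝ) ≤ 4 * ε ^ 2 := by positivity
        exact mul_le_mul_of_nonneg_left h2 h4
    _ = 4 * ε ^ 2 * n * ∑ j, ‖L (Pi.single j 1)‖ ^ 2 := by ring

lemma aux_pointwise {n : ℕ} {ε : ℝ} (hε : 0 < ε) (ψ : (Fin n → ℝ) → ℂ)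
    (hdiff : ∀ x ∈ Set.pi Set.univ (fun _ : Fin n => Set.Ioo (-ε) ε),
      HasFDerivAt ψ (fderiv ℝ ψ x) x)
    (hcont : ContinuousOn (fderiv ℝ ψ) (Set.pi Set.univ (fun _ : Fin n => Set.Ioo (-ε) ε)))
    {a b : Fin n → ℝ} (ha : a ∈ Set.pi Set.univ (fun _ : Fin n => Set.Ioo (-ε) ε))
    (hb : b ∈ Set.pi Set.univ (fun _ : Fin n => Set.Ioo (-ε) ε)) :
    ENNReal.ofReal (‖ψ a‖ ^ 2) ≤ 2 * ENNReal.ofReal (‖ψ b‖ ^ 2)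
      + ENNReal.ofReal (8 * ε ^ 2 * n) * ∫⁻ s in Set.Ioc (0:ℝ) 1,
          ENNReal.ofReal
            (∑ j, ‖fderiv ℝ ψ (b + s • (a - b)) (Pi.single j 1)‖ ^ 2) := by
  set U : Set (Fin n → ℝ) := Set.pi Set.univ (fun _ : Fin n => Set.Ioo (-ε) ε) with hU
  have hUconv : Convex ℝ U := convex_pi fun i _ => convex_Ioo _ _
  set γ : ℝ → (Fin n → ℝ) := fun s => b + s • (a - b) with hγdef
  have hγmem : ∀ s ∈ Set.Icc (0:ℝ) 1, γ s ∈ U := by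
    intro s hs
    have heq : γ s = (1 - s) • b + s • a := by
      simp only [hγdef]; module
    rw [heq]
    exact hUconv hb ha (by linarith [hs.2]) hs.1 (by ring)
  set F' : ℝ → ℂ := fun s => fderiv ℝ ψ (γ s) (a - b) with hF'def
  have hγcont : Continuous γ := by
    apply continuous_const.add
    exact (continuous_id.smul continuous_const)
  have hF'contOn : ContinuousOn F' (Set.Icc (0:ℝ) 1) := by
    have h1 : ContinuousOn (fun s => fderiv ℝ ψ (γ s)) (Set.Icc (0:ℝ) 1) :=
      hcont.comp hγcont.continuousOn hγmem
    exact h1.clm_apply continuousOn_const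
  have hderiv : ∀ s ∈ Set.uIcc (0:ℝ) 1, HasDerivAt (fun t => ψ (γ t)) (F' s) s := by
    intro s hs
    rw [Set.uIcc_of_le (zero_le_one)] at hs
    have h1 : HasFDerivAt ψ (fderiv ℝ ψ (γ s)) (γ s) := hdiff _ (hγmem s hs)
    have h2 : HasDerivAt γ (a - b) s := by
      have h3 := (hasDerivAt_id s).smul_const (a - b)
      simpa [hγdef, one_smul] using (h3.const_add b)
    exact h1.comp_hasDerivAt s h2
  have hInt : IntervalIntegrable F' volume 0 1 := by
    apply ContinuousOn.intervalIntegrable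
    rwa [Set.uIcc_of_le zero_le_one]
  have hftc : ∫ s in (0:ℝ)..1, F' s = ψ a - ψ b := by
    have h := intervalIntegral.integral_eq_sub_of_hasDerivAt hderiv hInt
    rw [h]
    congr 2 <;> simp [hγdef]
  have key1 : ENNReal.ofReal ‖ψ a - ψ b‖ ≤ ∫⁻ s in Set.Ioc (0:ℝ) 1, ENNReal.ofReal ‖F' s‖ := by
    rw [← hftc, intervalIntegral.integral_of_le zero_le_one]
    calc ENNReal.ofReal ‖∫ s in Set.Ioc (0:ℝ) 1, F' s‖
        = ↑‖∫ s in Set.Ioc (0:ℝ) 1, F' s‖₊ := ofReal_norm_eq_enorm _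
      _ ≤ ∫⁻ s in Set.Ioc (0:ℝ) 1, ↑‖F' s‖₊ := enorm_integral_le_lintegral_enorm _
      _ = ∫⁻ s in Set.Ioc (0:ℝ) 1, ENNReal.ofReal ‖F' s‖ := by
          apply lintegral_congr
          intro s
          exact (ofReal_norm_eq_enorm _).symm
  have hμ1 : (volume.restrict (Set.Ioc (0:ℝ) 1)) Set.univ ≤ 1 := by
    rw [Measure.restrict_apply_univ, Real.volume_Ioc]
    simp
  have hF'meas : AEMeasurable (fun s => ENNReal.ofReal ‖F' s‖)
      (volume.restrict (Set.Ioc (0:ℝ) 1)) := by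
    have h1 : AEMeasurable F' (volume.restrict (Set.Ioc (0:ℝ) 1)) :=
      (hF'contOn.mono Set.Ioc_subset_Icc_self).aemeasurable measurableSet_Ioc
    exact ENNReal.measurable_ofReal.comp_aemeasurable h1.norm
  have key2 : (∫⁻ s in Set.Ioc (0:ℝ) 1, ENNReal.ofReal ‖F' s‖) ^ 2
      ≤ ∫⁻ s in Set.Ioc (0:ℝ) 1, (ENNReal.ofReal ‖F' s‖) ^ 2 :=
    aux_sq_lintegral_le _ hμ1 hF'meas
  have hv : ∀ j, |(a - b) j| ≤ 2 * ε := by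
    intro j
    have haj := ha j (Set.mem_univ j)
    have hbj := hb j (Set.mem_univ j)
    simp only [Set.mem_Ioo] at haj hbj
    rw [Pi.sub_apply, abs_sub_le_iff]
    constructor <;> linarith
  have key3 : ∀ s ∈ Set.Ioc (0:ℝ) 1, (ENNReal.ofReal ‖F' s‖) ^ 2
      ≤ ENNReal.ofReal (4 * ε ^ 2 * n) *
        ENNReal.ofReal (∑ j, ‖fderiv ℝ ψ (γ s) (Pi.single j 1)‖ ^ 2) := by
    intro s hs
    rw [← ENNReal.ofReal_pow (norm_nonneg _), ← ENNReal.ofReal_mul (by positivity)]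
    exact ENNReal.ofReal_le_ofReal (aux_op_bound hε.le (fderiv ℝ ψ (γ s)) (a - b) hv)
  have key4 : ∫⁻ s in Set.Ioc (0:ℝ) 1, (ENNReal.ofReal ‖F' s‖) ^ 2
      ≤ ENNReal.ofReal (4 * ε ^ 2 * n) *
        ∫⁻ s in Set.Ioc (0:ℝ) 1,
          ENNReal.ofReal (∑ j, ‖fderiv ℝ ψ (γ s) (Pi.single j 1)‖ ^ 2) := by
    rw [← lintegral_const_mul' _ _ ENNReal.ofReal_ne_top]
    apply lintegral_mono_ae
    filter_upwards [ae_restrict_mem measurableSet_Ioc] with s hs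
    exact key3 s hs
  have hre : ‖ψ a‖ ^ 2 ≤ 2 * ‖ψ b‖ ^ 2 + 2 * ‖ψ a - ψ b‖ ^ 2 := by
    have h1 : ‖ψ a‖ ≤ ‖ψ b‖ + ‖ψ a - ψ b‖ := by
      calc ‖ψ a‖ = ‖ψ b + (ψ a - ψ b)‖ := by ring_nf
        _ ≤ ‖ψ b‖ + ‖ψ a - ψ b‖ := norm_add_le _ _
    nlinarith [norm_nonneg (ψ b), norm_nonneg (ψ a - ψ b), sq_nonneg (‖ψ b‖ - ‖ψ a - ψ b‖),
      norm_nonneg (ψ a)]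
  have hcoef : (2:ℝ≥0∞) * ENNReal.ofReal (4 * ε ^ 2 * n) = ENNReal.ofReal (8 * ε ^ 2 * n) := by
    rw [← ENNReal.ofReal_ofNat 2, ← ENNReal.ofReal_mul (by norm_num)]
    congr 1
    ring
  calc ENNReal.ofReal (‖ψ a‖ ^ 2)
      ≤ ENNReal.ofReal (2 * ‖ψ b‖ ^ 2 + 2 * ‖ψ a - ψ b‖ ^ 2) := ENNReal.ofReal_le_ofReal hre
    _ = 2 * ENNReal.ofReal (‖ψ b‖ ^ 2) + 2 * ENNReal.ofReal (‖ψ a - ψ b‖ ^ 2) := by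
        rw [ENNReal.ofReal_add (by positivity) (by positivity),
          ENNReal.ofReal_mul (by norm_num), ENNReal.ofReal_mul (by norm_num)]
        norm_num
    _ ≤ 2 * ENNReal.ofReal (‖ψ b‖ ^ 2) + 2 * (ENNReal.ofReal (4 * ε ^ 2 * n) *
          ∫⁻ s in Set.Ioc (0:ℝ) 1,
            ENNReal.ofReal (∑ j, ‖fderiv ℝ ψ (γ s) (Pi.single j 1)‖ ^ 2)) := by
        gcongr
        calc ENNReal.ofReal (‖ψ a - ψ b‖ ^ 2)
            = (ENNReal.ofReal ‖ψ a - ψ b‖) ^ 2 := by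
              rw [ENNReal.ofReal_pow (norm_nonneg _)]
          _ ≤ (∫⁻ s in Set.Ioc (0:ℝ) 1, ENNReal.ofReal ‖F' s‖) ^ 2 := by gcongr
          _ ≤ ∫⁻ s in Set.Ioc (0:ℝ) 1, (ENNReal.ofReal ‖F' s‖) ^ 2 := key2
          _ ≤ _ := key4
    _ = 2 * ENNReal.ofReal (‖ψ b‖ ^ 2)
        + ENNReal.ofReal (8 * ε ^ 2 * n) * ∫⁻ s in Set.Ioc (0:ℝ) 1,
            ENNReal.ofReal (∑ j, ‖fderiv ℝ ψ (γ s) (Pi.single j 1)‖ ^ 2) := by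
        rw [← mul_assoc, hcoef]

-- the triple-integral bound
lemma aux_T {n : ℕ} {ε : ℝ} (hε : 0 < ε)
    (g : (Fin n → ℝ) → ℝ≥0∞) (hg : Measurable g)
    {B : Set (Fin n → ℝ)} (hBmeas : MeasurableSet B)
    (hBU : B ⊆ Set.pi Set.univ (fun _ : Fin n => Set.Ioo (-ε) ε)) :
    ∫⁻ a in Set.pi Set.univ (fun _ : Fin n => Set.Ioo (-ε) ε),
      ∫⁻ b in B, ∫⁻ s in Set.Ioc (0:ℝ) 1, g (b + s • (a - b))
    ≤ 2 ^ (n+1) * (volume (Set.pi Set.univ (fun _ : Fin n => Set.Ioo (-ε) ε)) *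
        ∫⁻ x in Set.pi Set.univ (fun _ : Fin n => Set.Ioo (-ε) ε), g x) := by
  set U : Set (Fin n → ℝ) := Set.pi Set.univ (fun _ : Fin n => Set.Ioo (-ε) ε) with hUdef
  have hUopen : IsOpen U := isOpen_set_pi Set.finite_univ (fun i _ => isOpen_Ioo)
  have hUmeas : MeasurableSet U := hUopen.measurableSet
  have hUconv : Convex ℝ U := convex_pi fun i _ => convex_Ioo _ _
  set H : (Fin n → ℝ) → ℝ≥0∞ := fun x => Set.indicator U g x with hHdef
  have hHmeas : Measurable H := hg.indicator hUmeas
  have hHint : ∫⁻ x, H x = ∫⁻ x in U, g x := lintegral_indicator hUmeas g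
  set R : ℝ≥0∞ := ∫⁻ x in U, g x with hRdef
  have hmem : ∀ a ∈ U, ∀ b ∈ B, ∀ s ∈ Set.Icc (0:ℝ) 1, (1 - s) • b + s • a ∈ U := by
    intro a ha b hb s hs
    exact hUconv (hBU hb) ha (by linarith [hs.2]) hs.1 (by ring)
  have halg : ∀ (a b : Fin n → ℝ) (s : ℝ), b + s • (a - b) = (1 - s) • b + s • a := by
    intro a b s; module
  have hmeas3 : ∀ {β : Type} [MeasurableSpace β] (φ : β → (Fin n → ℝ)) (σ : β → ℝ)
      (τ : β → (Fin n → ℝ)), Measurable φ → Measurable σ → Measurable τ →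
      Measurable fun p => g (φ p + σ p • (τ p - φ p)) := by
    intro β _ φ σ τ hφ hσ hτ
    exact hg.comp (hφ.add (hσ.smul (hτ.sub hφ)))
  -- inner bound for the first half
  have hpart1 : ∀ a ∈ U, ∀ s ∈ Set.Ioc (0:ℝ) (1/2),
      ∫⁻ b in B, g (b + s • (a - b)) ≤ 2 ^ n * R := by
    intro a ha s hs
    have hs01 : s ∈ Set.Icc (0:ℝ) 1 := ⟨hs.1.le, by linarith [hs.2]⟩
    calc ∫⁻ b in B, g (b + s • (a - b))
        ≤ ∫⁻ b, H ((1-s) • b + s • a) := by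
          rw [← lintegral_indicator hBmeas]
          refine lintegral_mono fun b => ?_
          by_cases hbB : b ∈ B
          · rw [Set.indicator_of_mem hbB, halg]
            exact le_of_eq (Set.indicator_of_mem (hmem a ha b hbB s hs01) g).symm
          · rw [Set.indicator_of_notMem hbB]; exact zero_le
      _ ≤ 2 ^ n * ∫⁻ x, H x :=
          aux_lintegral_comp_smul_add H hHmeas (by linarith [hs.2]) (by linarith [hs.1]) _
      _ = 2 ^ n * R := by rw [hHint]
  -- inner bound for the second half
  have hpart2 : ∀ s ∈ Set.Ioc (1/2 : ℝ) 1, ∀ b ∈ B,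
      ∫⁻ a in U, g (b + s • (a - b)) ≤ 2 ^ n * R := by
    intro s hs b hb
    have hs01 : s ∈ Set.Icc (0:ℝ) 1 := ⟨by linarith [hs.1], hs.2⟩
    calc ∫⁻ a in U, g (b + s • (a - b))
        ≤ ∫⁻ a, H (s • a + (1-s) • b) := by
          rw [← lintegral_indicator hUmeas]
          refine lintegral_mono fun a => ?_
          by_cases haU : a ∈ U
          · rw [Set.indicator_of_mem haU, halg,
              show (1-s) • b + s • a = s • a + (1-s) • b from add_comm _ _]
            refine le_of_eq (Set.indicator_of_mem ?_ g).symm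
            rw [show s • a + (1-s) • b = (1-s) • b + s • a from add_comm _ _]
            exact hmem a haU b hb s hs01
          · rw [Set.indicator_of_notMem haU]; exact zero_le
      _ ≤ 2 ^ n * ∫⁻ x, H x :=
          aux_lintegral_comp_smul_add H hHmeas (by linarith [hs.1]) hs.2 _
      _ = 2 ^ n * R := by rw [hHint]
  -- swap b and s inside
  have hswap1 : ∀ a, (∫⁻ b in B, ∫⁻ s in Set.Ioc (0:ℝ) 1, g (b + s • (a - b)))
      = ∫⁻ s in Set.Ioc (0:ℝ) 1, ∫⁻ b in B, g (b + s • (a - b)) := by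
    intro a
    refine lintegral_lintegral_swap ?_
    have huncurry : Function.uncurry (fun b s => g (b + s • (a - b)))
        = fun p : (Fin n → ℝ) × ℝ => g (p.1 + p.2 • (a - p.1)) := rfl
    rw [huncurry]
    exact (hmeas3 (fun p : (Fin n → ℝ) × ℝ => p.1) (fun p => p.2) (fun _ => a) measurable_fst measurable_snd
        measurable_const).aemeasurable
  -- split [0,1] into two halves
  have hsplit : ∀ (h : ℝ → ℝ≥0∞), (∫⁻ s in Set.Ioc (0:ℝ) 1, h s)
      = (∫⁻ s in Set.Ioc (0:ℝ) (1/2), h s) + ∫⁻ s in Set.Ioc (1/2:ℝ) 1, h s := by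
    intro h
    rw [← Set.Ioc_union_Ioc_eq_Ioc (by norm_num : (0:ℝ) ≤ 1/2) (by norm_num : (1/2:ℝ) ≤ 1),
      lintegral_union measurableSet_Ioc]
    exact Set.Ioc_disjoint_Ioc_of_le le_rfl
  -- first-half integral bound, for each a ∈ U
  have hI1 : ∀ a ∈ U, (∫⁻ s in Set.Ioc (0:ℝ) (1/2), ∫⁻ b in B, g (b + s • (a - b)))
      ≤ 2 ^ n * R := by
    intro a ha
    calc (∫⁻ s in Set.Ioc (0:ℝ) (1/2), ∫⁻ b in B, g (b + s • (a - b)))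
        ≤ ∫⁻ _ in Set.Ioc (0:ℝ) (1/2), 2 ^ n * R := by
          refine lintegral_mono_ae ?_
          filter_upwards [ae_restrict_mem measurableSet_Ioc] with s hs
          exact hpart1 a ha s hs
      _ = 2 ^ n * R * volume (Set.Ioc (0:ℝ) (1/2)) := setLIntegral_const _ _
      _ ≤ 2 ^ n * R * 1 := by
          gcongr
          rw [Real.volume_Ioc]
          exact ENNReal.ofReal_le_one.mpr (by norm_num)
      _ = 2 ^ n * R := mul_one _
  -- second-half triple integral
  set F : (Fin n → ℝ) → ℝ → ℝ≥0∞ := fun a s => ∫⁻ b in B, g (b + s • (a - b)) with hFdef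
  have hFm : Measurable (Function.uncurry F) := by
    have huncurry : Function.uncurry F
        = fun p : (Fin n → ℝ) × ℝ => ∫⁻ b, g (b + p.2 • (p.1 - b)) ∂(volume.restrict B) := rfl
    rw [huncurry]
    exact Measurable.lintegral_prod_right'
      (hmeas3 (fun p : ((Fin n → ℝ) × ℝ) × (Fin n → ℝ) => p.2) (fun p => p.1.2)
        (fun p => p.1.1) measurable_snd (measurable_fst.snd) (measurable_fst.fst))
  have hT2 : (∫⁻ a in U, ∫⁻ s in Set.Ioc (1/2:ℝ) 1, F a s) ≤ 2 ^ n * R * volume U := by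
    have hswap2 : (∫⁻ a in U, ∫⁻ s in Set.Ioc (1/2:ℝ) 1, F a s)
        = ∫⁻ s in Set.Ioc (1/2:ℝ) 1, ∫⁻ a in U, F a s :=
      lintegral_lintegral_swap hFm.aemeasurable
    rw [hswap2]
    have hinner : ∀ s ∈ Set.Ioc (1/2:ℝ) 1, (∫⁻ a in U, F a s) ≤ 2 ^ n * R * volume U := by
      intro s hs
      have hswap3 : (∫⁻ a in U, F a s) = ∫⁻ b in B, ∫⁻ a in U, g (b + s • (a - b)) := by
        rw [hFdef]
        refine lintegral_lintegral_swap ?_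
        have huncurry : Function.uncurry (fun a b => g (b + s • (a - b)))
            = fun p : (Fin n → ℝ) × (Fin n → ℝ) => g (p.2 + s • (p.1 - p.2)) := rfl
        rw [huncurry]
        exact (hmeas3 (fun p : (Fin n → ℝ) × (Fin n → ℝ) => p.2) (fun _ => s) (fun p => p.1) measurable_snd
          measurable_const measurable_fst).aemeasurable
      rw [hswap3]
      calc (∫⁻ b in B, ∫⁻ a in U, g (b + s • (a - b)))
          ≤ ∫⁻ _ in B, 2 ^ n * R := by
            refine lintegral_mono_ae ?_
            filter_upwards [ae_restrict_mem hBmeas] with b hb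
            exact hpart2 s hs b hb
        _ = 2 ^ n * R * volume B := setLIntegral_const _ _
        _ ≤ 2 ^ n * R * volume U :=
            mul_le_mul_right (measure_mono hBU) _
    calc (∫⁻ s in Set.Ioc (1/2:ℝ) 1, ∫⁻ a in U, F a s)
        ≤ ∫⁻ _ in Set.Ioc (1/2:ℝ) 1, 2 ^ n * R * volume U := by
          refine lintegral_mono_ae ?_
          filter_upwards [ae_restrict_mem measurableSet_Ioc] with s hs
          exact hinner s hs
      _ = 2 ^ n * R * volume U * volume (Set.Ioc (1/2:ℝ) 1) := setLIntegral_const _ _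
      _ ≤ 2 ^ n * R * volume U * 1 := by
          gcongr
          rw [Real.volume_Ioc]
          exact ENNReal.ofReal_le_one.mpr (by norm_num)
      _ = 2 ^ n * R * volume U := mul_one _
  -- assemble
  calc (∫⁻ a in U, ∫⁻ b in B, ∫⁻ s in Set.Ioc (0:ℝ) 1, g (b + s • (a - b)))
      = ∫⁻ a in U, ((∫⁻ s in Set.Ioc (0:ℝ) (1/2), ∫⁻ b in B, g (b + s • (a - b)))
          + ∫⁻ s in Set.Ioc (1/2:ℝ) 1, F a s) := by
        refine lintegral_congr fun a => ?_
        rw [hswap1 a, hsplit]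
    _ ≤ ∫⁻ a in U, (2 ^ n * R + ∫⁻ s in Set.Ioc (1/2:ℝ) 1, F a s) := by
        refine lintegral_mono_ae ?_
        filter_upwards [ae_restrict_mem hUmeas] with a ha
        exact add_le_add_left (hI1 a ha) _
    _ = 2 ^ n * R * volume U + ∫⁻ a in U, ∫⁻ s in Set.Ioc (1/2:ℝ) 1, F a s := by
        rw [lintegral_add_left' aemeasurable_const, setLIntegral_const]
    _ ≤ 2 ^ n * R * volume U + 2 ^ n * R * volume U := add_le_add_right hT2 _
    _ = 2 ^ (n+1) * (volume U * R) := by rw [pow_succ]; ring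

/-!
Local Poincaré-type inequality on the cube `U_ε = (-ε, ε)^n ⊆ ℝ^n`:  for every `ε > 0` and
`n ≥ 1` there is a constant `C₁ > 0`, depending only on `n` and `ε`, such that for every
open `B ⊆ U_ε` and every smooth (complex-valued) `ψ` on `U_ε`,
`m(B) ∫_{U_ε} |ψ|² ≤ C₁ (∫_B |ψ|² + ∑_j ∫_{U_ε} |∂ψ/∂t_j|²)`.
(Here, as in the intended application, `ψ` is the coordinate expression of a smooth
function on a compact manifold, hence smooth up to the boundary of the cube.)
-/
theorem local_poincare_cube
    (n : ℕ) (hn : 1 ≤ n) (ε : ℝ) (hε : 0 < ε) :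
    ∃ C₁ : ℝ, 0 < C₁ ∧
      ∀ B : Set (Fin n → ℝ), IsOpen B →
        B ⊆ Set.pi Set.univ (fun _ : Fin n => Set.Ioo (-ε) ε) →
      ∀ ψ : (Fin n → ℝ) → ℂ,
        ContDiffOn ℝ (⊤ : ℕ∞) ψ (closure (Set.pi Set.univ (fun _ : Fin n => Set.Ioo (-ε) ε))) →
      (volume B).toReal *
          ∫ t in Set.pi Set.univ (fun _ : Fin n => Set.Ioo (-ε) ε), ‖ψ t‖ ^ 2 ≤
        C₁ * ((∫ t in B, ‖ψ t‖ ^ 2) +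
          ∑ j : Fin n,
            ∫ t in Set.pi Set.univ (fun _ : Fin n => Set.Ioo (-ε) ε),
              ‖fderiv ℝ ψ t (Pi.single j 1)‖ ^ 2) := by
  classical
  set U : Set (Fin n → ℝ) := Set.pi Set.univ (fun _ : Fin n => Set.Ioo (-ε) ε) with hUdef
  have hUopen : IsOpen U := isOpen_set_pi Set.finite_univ (fun i _ => isOpen_Ioo)
  have hUmeas : MeasurableSet U := hUopen.measurableSet
  have hUconv : Convex ℝ U := convex_pi fun i _ => convex_Ioo _ _
  have hKeq : closure U = Set.pi Set.univ (fun _ : Fin n => Set.Icc (-ε) ε) := by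
    have hcl : closure (Set.Ioo (-ε) ε) = Set.Icc (-ε) ε := closure_Ioo (by linarith)
    rw [hUdef, closure_pi_set]
    simp only [hcl]
  have hKcomp : IsCompact (closure U) := by
    rw [hKeq]; exact isCompact_univ_pi fun i => isCompact_Icc
  -- volume of U
  have hνU : volume U = ENNReal.ofReal ((2*ε)^n) := by
    rw [hUdef, volume_pi_pi]
    simp only [Real.volume_Ioo]
    rw [Finset.prod_const, Finset.card_univ, Fintype.card_fin,
      ← ENNReal.ofReal_pow (by linarith)]
    congr 2
    ring
  have hνU_ne_top : volume U ≠ ⊤ := by rw [hνU]; exact ENNReal.ofReal_ne_top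
  set C₁ : ℝ := (2 + 8 * ε ^ 2 * n * 2 ^ (n+1)) * (2*ε) ^ n with hC₁def
  have hC₁pos : 0 < C₁ := by
    apply _root_.mul_pos
    · have : (0:ℝ) ≤ 8 * ε ^ 2 * n * 2 ^ (n+1) := by positivity
      linarith
    · exact pow_pos (by linarith) n
  refine ⟨C₁, hC₁pos, ?_⟩
  intro B hBopen hBU ψ hψ
  have hBmeas : MeasurableSet B := hBopen.measurableSet
  have hB_ne_top : volume B ≠ ⊤ := ne_top_of_le_ne_top hνU_ne_top (measure_mono hBU)
  -- regularity consequences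
  have hψc : ContinuousOn ψ (closure U) := hψ.continuousOn
  have hnhds : ∀ x ∈ U, closure U ∈ nhds x := fun x hx =>
    mem_nhds_iff.2 ⟨U, subset_closure, hUopen, hx⟩
  have hdiff : ∀ x ∈ U, HasFDerivAt ψ (fderiv ℝ ψ x) x := fun x hx =>
    ((hψ.differentiableOn (by simp)).differentiableAt (hnhds x hx)).hasFDerivAt
  have h0U : (0 : Fin n → ℝ) ∈ U := by
    intro i _
    have h0 : (0 : Fin n → ℝ) i = 0 := rfl
    rw [Set.mem_Ioo, h0]
    constructor <;> linarith
  have huniq : UniqueDiffOn ℝ (closure U) :=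
    uniqueDiffOn_convex hUconv.closure
      ⟨0, interior_maximal subset_closure hUopen h0U⟩
  have hfw : ContinuousOn (fderivWithin ℝ ψ (closure U)) (closure U) :=
    hψ.continuousOn_fderivWithin huniq (by simp)
  have heqfd : ∀ x ∈ U, fderivWithin ℝ ψ (closure U) x = fderiv ℝ ψ x := fun x hx =>
    fderivWithin_of_mem_nhds (hnhds x hx)
  have hcontfd : ContinuousOn (fderiv ℝ ψ) U :=
    (hfw.mono subset_closure).congr fun x hx => (heqfd x hx).symm
  -- bounds
  obtain ⟨C₀, hC₀⟩ := hKcomp.exists_bound_of_continuousOn hψc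
  obtain ⟨C₂, hC₂⟩ := hKcomp.exists_bound_of_continuousOn hfw
  -- the gradient-square function
  set g : (Fin n → ℝ) → ℝ≥0∞ :=
    fun x => ENNReal.ofReal (∑ j, ‖fderiv ℝ ψ x (Pi.single j 1)‖ ^ 2) with hgdef
  have hgmeas : Measurable g := by
    apply Measurable.ennreal_ofReal
    exact Finset.measurable_sum _ fun j _ =>
      ((measurable_fderiv_apply_const ℝ ψ (Pi.single j 1)).norm.pow_const 2)
  set P : ℝ≥0∞ := ∫⁻ a in U, ENNReal.ofReal (‖ψ a‖ ^ 2) with hPdef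
  set Q : ℝ≥0∞ := ∫⁻ b in B, ENNReal.ofReal (‖ψ b‖ ^ 2) with hQdef
  set R : ℝ≥0∞ := ∫⁻ x in U, g x with hRdef
  -- finiteness
  have hP_ne_top : P ≠ ⊤ := by
    have hb : P ≤ ENNReal.ofReal (C₀ ^ 2) * volume U := by
      rw [hPdef]
      calc ∫⁻ a in U, ENNReal.ofReal (‖ψ a‖ ^ 2)
          ≤ ∫⁻ _ in U, ENNReal.ofReal (C₀ ^ 2) := by
            refine lintegral_mono_ae ?_
            filter_upwards [ae_restrict_mem hUmeas] with a ha
            exact ENNReal.ofReal_le_ofReal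
              (pow_le_pow_left₀ (norm_nonneg _) (hC₀ a (subset_closure ha)) 2)
        _ = ENNReal.ofReal (C₀ ^ 2) * volume U := setLIntegral_const _ _
    exact ne_top_of_le_ne_top (ENNReal.mul_ne_top ENNReal.ofReal_ne_top hνU_ne_top) hb
  have hQ_le_P : Q ≤ P := lintegral_mono_set hBU
  have hQ_ne_top : Q ≠ ⊤ := ne_top_of_le_ne_top hP_ne_top hQ_le_P
  have hR_ne_top : R ≠ ⊤ := by
    set C₃ : ℝ := ∑ j : Fin n, (C₂ * ‖(Pi.single j 1 : Fin n → ℝ)‖) ^ 2 with hC₃def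
    have hb : R ≤ ENNReal.ofReal C₃ * volume U := by
      rw [hRdef]
      calc ∫⁻ x in U, g x
          ≤ ∫⁻ _ in U, ENNReal.ofReal C₃ := by
            refine lintegral_mono_ae ?_
            filter_upwards [ae_restrict_mem hUmeas] with x hx
            rw [hgdef]
            apply ENNReal.ofReal_le_ofReal
            refine Finset.sum_le_sum fun j _ => ?_
            apply pow_le_pow_left₀ (norm_nonneg _)
            calc ‖fderiv ℝ ψ x (Pi.single j 1)‖
                ≤ ‖fderiv ℝ ψ x‖ * ‖(Pi.single j 1 : Fin n → ℝ)‖ :=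
                  (fderiv ℝ ψ x).le_opNorm _
              _ ≤ C₂ * ‖(Pi.single j 1 : Fin n → ℝ)‖ := by
                  apply mul_le_mul_of_nonneg_right _ (norm_nonneg _)
                  rw [← heqfd x hx]
                  exact hC₂ x (subset_closure hx)
        _ = ENNReal.ofReal C₃ * volume U := setLIntegral_const _ _
    exact ne_top_of_le_ne_top (ENNReal.mul_ne_top ENNReal.ofReal_ne_top hνU_ne_top) hb
  -- measurability for additivity on B
  have hψQmeas : AEMeasurable (fun b => (2:ℝ≥0∞) * ENNReal.ofReal (‖ψ b‖ ^ 2))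
      (volume.restrict B) := by
    have hψB : AEMeasurable ψ (volume.restrict B) :=
      (hψc.mono ((hBU.trans subset_closure))).aemeasurable hBmeas
    exact (((ENNReal.continuous_ofReal.comp
      ((continuous_norm (E := ℂ)).pow 2)).measurable).comp_aemeasurable hψB).const_mul 2
  -- Step 1: integrate the pointwise bound over b ∈ B
  have step1 : ∀ a ∈ U, volume B * ENNReal.ofReal (‖ψ a‖ ^ 2)
      ≤ 2 * Q + ENNReal.ofReal (8 * ε ^ 2 * n) *
          ∫⁻ b in B, ∫⁻ s in Set.Ioc (0:ℝ) 1, g (b + s • (a - b)) := by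
    intro a ha
    calc volume B * ENNReal.ofReal (‖ψ a‖ ^ 2)
        = ∫⁻ _ in B, ENNReal.ofReal (‖ψ a‖ ^ 2) := by
          rw [setLIntegral_const, mul_comm]
      _ ≤ ∫⁻ b in B, (2 * ENNReal.ofReal (‖ψ b‖ ^ 2)
            + ENNReal.ofReal (8 * ε ^ 2 * n) *
              ∫⁻ s in Set.Ioc (0:ℝ) 1, g (b + s • (a - b))) := by
          refine lintegral_mono_ae ?_
          filter_upwards [ae_restrict_mem hBmeas] with b hb
          exact aux_pointwise hε ψ hdiff hcontfd ha (hBU hb)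
      _ = 2 * Q + ENNReal.ofReal (8 * ε ^ 2 * n) *
            ∫⁻ b in B, ∫⁻ s in Set.Ioc (0:ℝ) 1, g (b + s • (a - b)) := by
          rw [lintegral_add_left' hψQmeas, lintegral_const_mul' 2 _ (by norm_num),
            lintegral_const_mul' _ _ ENNReal.ofReal_ne_top]
  -- Step 2: integrate over a ∈ U
  have step2 : volume B * P ≤ 2 * Q * volume U + ENNReal.ofReal (8 * ε ^ 2 * n) *
      (2 ^ (n+1) * (volume U * R)) := by
    calc volume B * P
        = ∫⁻ a in U, volume B * ENNReal.ofReal (‖ψ a‖ ^ 2) := by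
          rw [hPdef, lintegral_const_mul' _ _ hB_ne_top]
      _ ≤ ∫⁻ a in U, (2 * Q + ENNReal.ofReal (8 * ε ^ 2 * n) *
            ∫⁻ b in B, ∫⁻ s in Set.Ioc (0:ℝ) 1, g (b + s • (a - b))) := by
          refine lintegral_mono_ae ?_
          filter_upwards [ae_restrict_mem hUmeas] with a ha
          exact step1 a ha
      _ = 2 * Q * volume U + ENNReal.ofReal (8 * ε ^ 2 * n) *
            ∫⁻ a in U, ∫⁻ b in B, ∫⁻ s in Set.Ioc (0:ℝ) 1, g (b + s • (a - b)) := by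
          rw [lintegral_add_left' aemeasurable_const, setLIntegral_const,
            lintegral_const_mul' _ _ ENNReal.ofReal_ne_top]
      _ ≤ 2 * Q * volume U + ENNReal.ofReal (8 * ε ^ 2 * n) *
            (2 ^ (n+1) * (volume U * R)) := by
          gcongr
          exact aux_T hε g hgmeas hBmeas hBU
  -- ENNReal form of the final bound
  have hkey : volume B * P ≤ ENNReal.ofReal C₁ * (Q + R) := by
    refine step2.trans ?_
    have hp : (0:ℝ) ≤ (2*ε)^n := by positivity
    have hc : (0:ℝ) ≤ 8 * ε ^ 2 * n * 2 ^ (n+1) := by positivity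
    have h1 : 2 * Q * volume U ≤ ENNReal.ofReal C₁ * Q := by
      rw [hνU, mul_comm 2 Q, mul_assoc, mul_comm Q]
      apply mul_le_mul_left
      calc (2:ℝ≥0∞) * ENNReal.ofReal ((2*ε)^n)
          = ENNReal.ofReal (2 * (2*ε)^n) := by
            rw [ENNReal.ofReal_mul (by norm_num), ENNReal.ofReal_ofNat]
      _ ≤ ENNReal.ofReal C₁ := by
            apply ENNReal.ofReal_le_ofReal
            rw [hC₁def]
            nlinarith [mul_nonneg hc hp]
    have h2 : ENNReal.ofReal (8 * ε ^ 2 * n) * (2 ^ (n+1) * (volume U * R))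
        ≤ ENNReal.ofReal C₁ * R := by
      rw [hνU, ← mul_assoc, ← mul_assoc]
      apply mul_le_mul_left
      calc ENNReal.ofReal (8 * ε ^ 2 * n) * 2 ^ (n+1) * ENNReal.ofReal ((2*ε)^n)
          = ENNReal.ofReal (8 * ε ^ 2 * n * 2 ^ (n+1) * (2*ε)^n) := by
            rw [show ((2:ℝ≥0∞) ^ (n+1)) = ENNReal.ofReal ((2:ℝ) ^ (n+1)) by
                rw [ENNReal.ofReal_pow (by norm_num)]; norm_num,
              ← ENNReal.ofReal_mul (by positivity), ← ENNReal.ofReal_mul (by positivity)]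
      _ ≤ ENNReal.ofReal C₁ := by
            apply ENNReal.ofReal_le_ofReal
            rw [hC₁def]
            nlinarith [mul_nonneg hc hp]
    calc 2 * Q * volume U + ENNReal.ofReal (8 * ε ^ 2 * n) * (2 ^ (n+1) * (volume U * R))
        ≤ ENNReal.ofReal C₁ * Q + ENNReal.ofReal C₁ * R := add_le_add h1 h2
      _ = ENNReal.ofReal C₁ * (Q + R) := (mul_add _ _ _).symm
  -- convert to real integrals
  have eqU : ∫ t in U, ‖ψ t‖ ^ 2 = P.toReal := by
    rw [hPdef]
    exact integral_eq_lintegral_of_nonneg_ae (ae_of_all _ fun t => by positivity)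
      (((hψc.mono subset_closure).norm.pow 2).aestronglyMeasurable hUmeas)
  have eqB : ∫ t in B, ‖ψ t‖ ^ 2 = Q.toReal := by
    rw [hQdef]
    exact integral_eq_lintegral_of_nonneg_ae (ae_of_all _ fun t => by positivity)
      (((hψc.mono (hBU.trans subset_closure)).norm.pow 2).aestronglyMeasurable hBmeas)
  set Rj : Fin n → ℝ≥0∞ :=
    fun j => ∫⁻ t in U, ENNReal.ofReal (‖fderiv ℝ ψ t (Pi.single j 1)‖ ^ 2) with hRjdef
  have hRsum : R = ∑ j, Rj j := by
    rw [hRdef, hRjdef]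
    have : ∀ x, g x = ∑ j, ENNReal.ofReal (‖fderiv ℝ ψ x (Pi.single j 1)‖ ^ 2) := by
      intro x
      rw [hgdef]
      exact ENNReal.ofReal_sum_of_nonneg fun j _ => by positivity
    simp_rw [this]
    exact lintegral_finset_sum' _ fun j _ =>
      (((measurable_fderiv_apply_const ℝ ψ (Pi.single j 1)).norm.pow_const 2).ennreal_ofReal).aemeasurable
  have hRj_ne_top : ∀ j ∈ Finset.univ, Rj j ≠ ⊤ := by
    intro j _
    refine ne_top_of_le_ne_top hR_ne_top ?_
    rw [hRsum]
    exact Finset.single_le_sum (fun i _ => zero_le) (Finset.mem_univ j)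
  have eqD : ∑ j : Fin n, ∫ t in U, ‖fderiv ℝ ψ t (Pi.single j 1)‖ ^ 2 = R.toReal := by
    rw [hRsum, ENNReal.toReal_sum hRj_ne_top]
    refine Finset.sum_congr rfl fun j _ => ?_
    rw [hRjdef]
    exact integral_eq_lintegral_of_nonneg_ae (ae_of_all _ fun t => by positivity)
      (((measurable_fderiv_apply_const ℝ ψ (Pi.single j 1)).norm.pow_const
        2).aestronglyMeasurable)
  -- final real inequality
  have hRHS_ne_top : ENNReal.ofReal C₁ * (Q + R) ≠ ⊤ :=
    ENNReal.mul_ne_top ENNReal.ofReal_ne_top (ENNReal.add_ne_top.2 ⟨hQ_ne_top, hR_ne_top⟩)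
  have hreal := ENNReal.toReal_mono hRHS_ne_top hkey
  rw [ENNReal.toReal_mul, ENNReal.toReal_mul, ENNReal.toReal_ofReal hC₁pos.le,
    ENNReal.toReal_add hQ_ne_top hR_ne_top] at hreal
  rw [eqU, eqB, eqD]
  exact hreal
end

section
/- Fix integers and real vectors v_p^ℓ ∈ ℝ^{d^ℓ} (ℓ=1,…,N, p=1,…,m^ℓ) and a splitting of each ξ ∈ ℤ^m into components ξ'_{(ℓ)} ∈ ℤ^{m^ℓ} and ξ''_{(ℓ)} ∈ ℤ^{d^ℓ}. Then the following are equivalent: (1) there exist C, ρ > 0 and n₀ ∈ ℕ such that (∑_{ℓ=1}^N ∑_{p=1}^{m^ℓ} |ξ_{j_p^ℓ} + v_p^ℓ·ξ''_{(ℓ)}|²)^{1/2} ≥ C(1+|ξ|²)^{-ρ} for all ξ ∈ ℤ^m with |ξ| ≥ n₀; (2) there exist B, M > 0 such that for each ξ ∈ ℤ^m \ {0} there exist ℓ and p with |ξ_{j_p^ℓ} + v_p^ℓ·ξ''_{(ℓ)}| ≥ B(1 + |ξ''_{(ℓ)}|)^{-M}. -/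
/-!
(2) ⇒ (1): one large form bounds the Euclidean norm of all forms from below, and
`|ξ''_{(ℓ)}| ≤ |ξ|`.

(1) ⇒ (2): the forms are linear, so applying (1) to `(n₀ + 1) ξ` removes the threshold `n₀` at
the cost of a constant. Some form is then at least a fixed fraction of the Euclidean norm of all
of them. If any form is `≥ 1` we are done; otherwise all forms of that block `ℓ` are `< 1`, so
`ξ'_{(ℓ)} = (forms) - V ξ''_{(ℓ)}` is controlled by `ξ''_{(ℓ)}`, i.e.
`1 + |ξ|² ≲ (1 + |ξ''_{(ℓ)}|)²`, and (1) becomes (2) with `M = 2ρ`.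
-/

open Finset Function Real

namespace Diophantine

section SingleBlock

variable {ι α β : Type*} [Fintype β]

theorem sum_comp_add_sum_comp_eq_sum [Fintype ι] [Fintype α] {M : Type*} [AddCommMonoid M]
    {j : α → ι} {i : β → ι} (hj : Injective j) (hi : Injective i)
    (hcompl : ∀ k, (∃ p, j p = k) ↔ ¬∃ q, i q = k) (g : ι → M) :
    ∑ p, g (j p) + ∑ q, g (i q) = ∑ k, g k := by
  have hbij : Bijective (Sum.elim j i) := by
    refine ⟨hj.sumElim hi fun p q h => (hcompl (j p)).1 ⟨p, rfl⟩ ⟨q, h.symm⟩, fun k => ?_⟩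
    by_cases hk : ∃ q, i q = k
    · obtain ⟨q, rfl⟩ := hk
      exact ⟨.inr q, rfl⟩
    · obtain ⟨p, rfl⟩ := (hcompl k).2 hk
      exact ⟨.inl p, rfl⟩
  rw [← Fintype.sum_bijective _ hbij (fun x => g (Sum.elim j i x)) g fun _ => rfl,
    Fintype.sum_sum_type]
  rfl

theorem sum_sq_comp_le_sum_sq [Fintype ι] {i : β → ι} (hi : Injective i) (x : ι → ℝ) :
    ∑ q, x (i q) ^ 2 ≤ ∑ k, x k ^ 2 := by
  classical
  rw [← sum_image (f := fun k => x k ^ 2) fun q _ q' _ h => hi h]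
  exact sum_le_univ_sum_of_nonneg fun k => sq_nonneg _

theorem abs_sum_mul_le_sqrt_mul_sqrt (f g : β → ℝ) :
    |∑ q, f q * g q| ≤ √(∑ q, f q ^ 2) * √(∑ q, g q ^ 2) := by
  refine abs_le.2 ⟨?_, sum_mul_le_sqrt_mul_sqrt _ f g⟩
  have := sum_mul_le_sqrt_mul_sqrt univ (-f) g
  simp only [Pi.neg_apply, neg_mul, sum_neg_distrib, neg_sq] at this
  linarith

/-- The form `ξ_{j_p} + v_p · ξ''` of a single block, evaluated at a real vector. -/
def form (j : α → ι) (i : β → ι) (v : α → β → ℝ) (x : ι → ℝ) (p : α) : ℝ :=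
  x (j p) + ∑ q, v p q * x (i q)

variable (j : α → ι) (i : β → ι) (v : α → β → ℝ)

theorem form_smul (c : ℝ) (x : ι → ℝ) (p : α) : form j i v (c • x) p = c * form j i v x p := by
  simp only [form, Pi.smul_apply, smul_eq_mul, mul_add, mul_sum, mul_left_comm]

theorem abs_apply_le_abs_form_add (x : ι → ℝ) (p : α) :
    |x (j p)| ≤ |form j i v x p| + √(∑ q, v p q ^ 2) * √(∑ q, x (i q) ^ 2) :=
  calc |x (j p)| = |form j i v x p - ∑ q, v p q * x (i q)| := by simp [form]
    _ ≤ |form j i v x p| + |∑ q, v p q * x (i q)| := abs_sub _ _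
    _ ≤ _ := by gcongr; exact abs_sum_mul_le_sqrt_mul_sqrt _ _

variable {j i v}

theorem one_add_sum_sq_le_of_abs_form_le_one [Fintype ι] [Fintype α] (hj : Injective j)
    (hi : Injective i) (hcompl : ∀ k, (∃ p, j p = k) ↔ ¬∃ q, i q = k) {V : ℝ}
    (hV : ∀ p, √(∑ q, v p q ^ 2) ≤ V) {x : ι → ℝ} (hx : ∀ p, |form j i v x p| ≤ 1) :
    1 + ∑ k, x k ^ 2 ≤ (Fintype.card ι * (1 + V) ^ 2 + 2) * (1 + √(∑ q, x (i q) ^ 2)) ^ 2 := by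
  set S := √(∑ q, x (i q) ^ 2)
  have hS : 0 ≤ S := sqrt_nonneg _
  have hxj : ∀ p, x (j p) ^ 2 ≤ (1 + V) ^ 2 * (1 + S) ^ 2 := by
    intro p
    have hV0 : 0 ≤ V := (sqrt_nonneg _).trans (hV p)
    have : |x (j p)| ≤ (1 + V) * (1 + S) :=
      calc |x (j p)| ≤ 1 + V * S :=
            (abs_apply_le_abs_form_add j i v x p).trans (by gcongr <;> simp [hx, hV])
        _ ≤ (1 + V) * (1 + S) := by nlinarith
    simpa only [sq_abs, mul_pow] using pow_le_pow_left₀ (abs_nonneg _) this 2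
  have hcard : (Fintype.card α : ℝ) ≤ Fintype.card ι := by
    exact_mod_cast Fintype.card_le_of_injective j hj
  calc 1 + ∑ k, x k ^ 2 = 1 + (∑ p, x (j p) ^ 2 + S ^ 2) := by
        rw [sq_sqrt (by positivity), sum_comp_add_sum_comp_eq_sum hj hi hcompl fun k => x k ^ 2]
    _ ≤ 1 + (Fintype.card α * ((1 + V) ^ 2 * (1 + S) ^ 2) + S ^ 2) := by
        gcongr
        simpa using sum_le_card_nsmul univ _ _ fun p _ => hxj p
    _ ≤ _ := by nlinarith [mul_le_mul_of_nonneg_right hcard (by positivity :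
          (0 : ℝ) ≤ (1 + V) ^ 2 * (1 + S) ^ 2)]

end SingleBlock

theorem exists_sqrt_sum_sq_le_sqrt_card_mul_abs {κ : Type*} [Fintype κ] [Nonempty κ]
    (a : κ → ℝ) : ∃ k, √(∑ k', a k' ^ 2) ≤ √(Fintype.card κ) * |a k| := by
  obtain ⟨k, hk⟩ := Finite.exists_max fun k => a k ^ 2
  refine ⟨k, ?_⟩
  rw [← sqrt_sq_eq_abs, ← sqrt_mul (Nat.cast_nonneg _)]
  exact sqrt_le_sqrt (by simpa using sum_le_card_nsmul univ _ _ fun k' _ => hk k')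

theorem abs_le_sqrt_sum_sum_sq {L : Type*} [Fintype L] {α : L → Type*} [∀ l, Fintype (α l)]
    (a : ∀ l, α l → ℝ) (l : L) (p : α l) : |a l p| ≤ √(∑ l, ∑ p, a l p ^ 2) := by
  rw [← sqrt_sq_eq_abs]
  refine sqrt_le_sqrt ((single_le_sum (fun p _ => sq_nonneg (a l p)) (mem_univ p)).trans ?_)
  exact single_le_sum (f := fun l => ∑ p, a l p ^ 2) (fun _ _ => by positivity) (mem_univ l)

theorem rpow_neg_mul_rpow_neg_le_of_le_mul_sq {a b c ρ : ℝ} (hc : 0 < c) (hb : 0 ≤ b)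
    (hρ : 0 ≤ ρ) (h : c ≤ a * b ^ 2) : a ^ (-ρ) * b ^ (-(2 * ρ)) ≤ c ^ (-ρ) := by
  have ha : 0 ≤ a := by nlinarith [sq_nonneg b]
  calc a ^ (-ρ) * b ^ (-(2 * ρ)) = (a * b ^ 2) ^ (-ρ) := by
        rw [mul_rpow ha (by positivity), ← rpow_natCast, ← rpow_mul hb]
        norm_num
    _ ≤ c ^ (-ρ) := rpow_le_rpow_of_nonpos hc h (by linarith)

theorem one_le_sum_sq_of_ne_zero {ι : Type*} [Fintype ι] {ξ : ι → ℤ} (hξ : ξ ≠ 0) :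
    1 ≤ ∑ k, (ξ k : ℝ) ^ 2 := by
  obtain ⟨k, hk⟩ := Function.ne_iff.mp hξ
  have : (1 : ℝ) ≤ |(ξ k : ℝ)| := by exact_mod_cast Int.one_le_abs hk
  exact (one_le_sq_iff_one_le_abs _).2 this |>.trans
    (single_le_sum (f := fun k => (ξ k : ℝ) ^ 2) (fun _ _ => sq_nonneg _) (mem_univ k))

theorem exists_lower_bound_of_homogeneous {ι : Type*} [Fintype ι] (f : (ι → ℝ) → ℝ)
    (hf : ∀ (t : ℕ) x, f ((t : ℝ) • x) = t * f x) {C ρ : ℝ} (hC : 0 < C) (hρ : 0 ≤ ρ) (n₀ : ℕ)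
    (h : ∀ ξ : ι → ℤ, (n₀ : ℝ) ≤ √(∑ k, (ξ k : ℝ) ^ 2) →
      f (fun k => ξ k) ≥ C * (1 + ∑ k, (ξ k : ℝ) ^ 2) ^ (-ρ)) :
    ∃ C₁ > 0, ∀ ξ : ι → ℤ, ξ ≠ 0 → C₁ * (1 + ∑ k, (ξ k : ℝ) ^ 2) ^ (-ρ) ≤ f fun k => ξ k := by
  set t : ℕ := n₀ + 1
  have ht : (1 : ℝ) ≤ t := by simp [t]
  refine ⟨C * (t : ℝ) ^ (-(2 * ρ)) / t, by positivity, fun ξ hξ => ?_⟩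
  set X := ∑ k, (ξ k : ℝ) ^ 2
  have hX : 1 ≤ X := one_le_sum_sq_of_ne_zero hξ
  have hcast : (fun k => ((t • ξ) k : ℝ)) = (t : ℝ) • fun k => (ξ k : ℝ) := by ext; simp
  have hXt : ∑ k, ((t • ξ) k : ℝ) ^ 2 = t ^ 2 * X := by
    simp only [X, mul_sum, ← mul_pow]; simp
  have hlarge : (n₀ : ℝ) ≤ √(∑ k, ((t • ξ) k : ℝ) ^ 2) := by
    rw [hXt, le_sqrt (by positivity) (by positivity)]
    have : (n₀ : ℝ) ≤ t := by simp [t]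
    nlinarith
  have key := h (t • ξ) hlarge
  rw [hcast, hf, hXt] at key
  have hscale := rpow_neg_mul_rpow_neg_le_of_le_mul_sq (a := 1 + X) (c := 1 + t ^ 2 * X)
    (by positivity) (Nat.cast_nonneg t) hρ (by nlinarith)
  rw [div_mul_eq_mul_div, div_le_iff₀ (by positivity)]
  calc C * (t : ℝ) ^ (-(2 * ρ)) * (1 + X) ^ (-ρ)
      = C * ((1 + X) ^ (-ρ) * (t : ℝ) ^ (-(2 * ρ))) := by ring
    _ ≤ C * (1 + t ^ 2 * X) ^ (-ρ) := by gcongr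
    _ ≤ _ := by linarith

section Blocks

variable {L ι : Type*} [Fintype L] {α β : L → Type*} [∀ l, Fintype (α l)]
  [∀ l, Fintype (β l)] (j : ∀ l, α l → ι) (i : ∀ l, β l → ι) (v : ∀ l, α l → β l → ℝ)

theorem sqrt_sum_sq_form_smul {c : ℝ} (hc : 0 ≤ c) (x : ι → ℝ) :
    √(∑ l, ∑ p, form (j l) (i l) (v l) (c • x) p ^ 2) =
      c * √(∑ l, ∑ p, form (j l) (i l) (v l) x p ^ 2) := by
  simp only [form_smul, mul_pow, ← mul_sum]
  rw [sqrt_mul (sq_nonneg c), sqrt_sq hc]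

variable {j i v}

theorem le_sqrt_sum_sq_form_of_le_abs_form [Fintype ι] {B M : ℝ} (hB : 0 ≤ B) (hM : 0 ≤ M)
    {x : ι → ℝ} {l : L} (hi : Injective (i l)) {p : α l}
    (h : B * (1 + √(∑ q, x (i l q) ^ 2)) ^ (-M) ≤ |form (j l) (i l) (v l) x p|) :
    B * 2 ^ (-M) * (1 + ∑ k, x k ^ 2) ^ (-M) ≤ √(∑ l, ∑ p, form (j l) (i l) (v l) x p ^ 2) := by
  set S := √(∑ q, x (i l q) ^ 2)
  set X := ∑ k, x k ^ 2
  have hS : 0 ≤ S := sqrt_nonneg _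
  have hSX : S ^ 2 ≤ X := (sq_sqrt (by positivity)).trans_le (sum_sq_comp_le_sum_sq hi x)
  have h1S : 1 + S ≤ 2 * (1 + X) := by nlinarith [sq_nonneg (S - 1)]
  calc B * 2 ^ (-M) * (1 + X) ^ (-M) = B * (2 * (1 + X)) ^ (-M) := by
        rw [mul_rpow (by norm_num) (by positivity), mul_assoc]
    _ ≤ B * (1 + S) ^ (-M) :=
        mul_le_mul_of_nonneg_left (rpow_le_rpow_of_nonpos (by positivity) h1S (by linarith)) hB
    _ ≤ _ := h
    _ ≤ _ := abs_le_sqrt_sum_sum_sq (fun l p => form (j l) (i l) (v l) x p) l p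

theorem exists_forall_le_abs_form [Fintype ι] [Nonempty (Σ l, α l)] (hj : ∀ l, Injective (j l))
    (hi : ∀ l, Injective (i l)) (hcompl : ∀ l k, (∃ p, j l p = k) ↔ ¬∃ q, i l q = k)
    {C ρ : ℝ} (hC : 0 < C) (hρ : 0 ≤ ρ) :
    ∃ B > 0, ∀ x : ι → ℝ,
      C * (1 + ∑ k, x k ^ 2) ^ (-ρ) ≤ √(∑ l, ∑ p, form (j l) (i l) (v l) x p ^ 2) →
        ∃ l p, B * (1 + √(∑ q, x (i l q) ^ 2)) ^ (-(2 * ρ)) ≤ |form (j l) (i l) (v l) x p| := by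
  obtain ⟨V, hV⟩ := Finite.exists_le fun lp : Σ l, α l => √(∑ q, v lp.1 lp.2 q ^ 2)
  set A : ℝ := Fintype.card ι * (1 + V) ^ 2 + 2
  set K : ℝ := √(Fintype.card (Σ l, α l))
  have hK : 0 < K := sqrt_pos.2 (by exact_mod_cast Fintype.card_pos)
  refine ⟨min 1 (C / K * A ^ (-ρ)), lt_min one_pos (by positivity), fun x hx => ?_⟩
  by_cases hbig : ∃ l p, 1 ≤ |form (j l) (i l) (v l) x p|
  · obtain ⟨l, p, hlp⟩ := hbig
    refine ⟨l, p, le_trans ?_ hlp⟩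
    exact mul_le_one₀ (min_le_left _ _) (rpow_nonneg (by positivity) _)
      (rpow_le_one_of_one_le_of_nonpos (by simp) (by linarith))
  push Not at hbig
  obtain ⟨⟨l, p⟩, hlp⟩ :=
    exists_sqrt_sum_sq_le_sqrt_card_mul_abs fun lp : Σ l, α l =>
      form (j lp.1) (i lp.1) (v lp.1) x lp.2
  rw [Fintype.sum_sigma] at hlp
  dsimp only at hlp
  refine ⟨l, p, ?_⟩
  set S := √(∑ q, x (i l q) ^ 2)
  have hA : 1 + ∑ k, x k ^ 2 ≤ A * (1 + S) ^ 2 :=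
    one_add_sum_sq_le_of_abs_form_le_one (hj l) (hi l) (hcompl l) (fun p => hV ⟨l, p⟩)
      fun p => (hbig l p).le
  calc min 1 (C / K * A ^ (-ρ)) * (1 + S) ^ (-(2 * ρ))
      ≤ C / K * (A ^ (-ρ) * (1 + S) ^ (-(2 * ρ))) := by
        rw [← mul_assoc]; gcongr; exact min_le_right _ _
    _ ≤ C / K * (1 + ∑ k, x k ^ 2) ^ (-ρ) := by
        gcongr; exact rpow_neg_mul_rpow_neg_le_of_le_mul_sq (by positivity) (by positivity) hρ hA
    _ ≤ √(∑ l, ∑ p, form (j l) (i l) (v l) x p ^ 2) / K := by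
        rw [div_mul_eq_mul_div]; gcongr
    _ ≤ _ := by rw [div_le_iff₀ hK]; linarith

end Blocks

end Diophantine

open Diophantine in
theorem diophantine_conditions_equivalent_general
    (m N : ℕ) (hN : 0 < N)
    (ml dl : Fin N → ℕ) (hml : ∀ l, 0 < ml l)
    (j : (l : Fin N) → Fin (ml l) → Fin m)
    (i : (l : Fin N) → Fin (dl l) → Fin m)
    (hj : ∀ l, StrictMono (j l)) (hi : ∀ l, StrictMono (i l))
    (hcompl : ∀ (l : Fin N) (k : Fin m), (∃ p, j l p = k) ↔ ¬ ∃ q, i l q = k)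
    (v : (l : Fin N) → Fin (ml l) → Fin (dl l) → ℝ) :
    (∃ C ρ : ℝ, 0 < C ∧ 0 < ρ ∧ ∃ n₀ : ℕ,
      ∀ ξ : Fin m → ℤ, (n₀ : ℝ) ≤ Real.sqrt (∑ k, ((ξ k : ℝ)) ^ 2) →
        Real.sqrt (∑ l, ∑ p,
            ((ξ (j l p) : ℝ) + ∑ q, v l p q * (ξ (i l q) : ℝ)) ^ 2) ≥
          C * (1 + ∑ k, ((ξ k : ℝ)) ^ 2) ^ (-ρ)) ↔
    (∃ B M : ℝ, 0 < B ∧ 0 < M ∧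
      ∀ ξ : Fin m → ℤ, ξ ≠ 0 →
        ∃ (l : Fin N) (p : Fin (ml l)),
          |(ξ (j l p) : ℝ) + ∑ q, v l p q * (ξ (i l q) : ℝ)| ≥
            B * (1 + Real.sqrt (∑ q, ((ξ (i l q) : ℝ)) ^ 2)) ^ (-M)) := by
  constructor
  · rintro ⟨C, ρ, hC, hρ, n₀, h1⟩
    have : Nonempty (Σ l, Fin (ml l)) := ⟨⟨⟨0, hN⟩, ⟨0, hml _⟩⟩⟩
    obtain ⟨C₁, hC₁, hC₁ξ⟩ := exists_lower_bound_of_homogeneous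
      (fun x => √(∑ l, ∑ p, form (j l) (i l) (v l) x p ^ 2))
      (fun t => sqrt_sum_sq_form_smul j i v (Nat.cast_nonneg t)) hC hρ.le n₀ h1
    obtain ⟨B, hB, hBξ⟩ := exists_forall_le_abs_form (fun l => (hj l).injective)
      (fun l => (hi l).injective) hcompl hC₁ hρ.le
    exact ⟨B, 2 * ρ, hB, by positivity, fun ξ hξ => hBξ (fun k => ξ k) (hC₁ξ ξ hξ)⟩
  · rintro ⟨B, M, hB, hM, h2⟩
    refine ⟨B * 2 ^ (-M), M, by positivity, hM, 1, fun ξ hξ => ?_⟩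
    obtain ⟨l, p, hlp⟩ := h2 ξ (by rintro rfl; norm_num at hξ)
    exact le_sqrt_sum_sq_form_of_le_abs_form hB.le hM.le (hi l).injective hlp

theorem diophantine_conditions_equivalent
    (m N : ℕ) (hN : 0 < N)
    (ml dl : Fin N → ℕ) (hml : ∀ l, 0 < ml l) (hdl : ∀ l, 0 < dl l)
    (hsum : ∀ l, ml l + dl l = m)
    (j : (l : Fin N) → Fin (ml l) → Fin m)
    (i : (l : Fin N) → Fin (dl l) → Fin m)
    (hj : ∀ l, StrictMono (j l)) (hi : ∀ l, StrictMono (i l))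
    (hcompl : ∀ (l : Fin N) (k : Fin m), (∃ p, j l p = k) ↔ ¬ ∃ q, i l q = k)
    (v : (l : Fin N) → Fin (ml l) → Fin (dl l) → ℝ) :
    (∃ C ρ : ℝ, 0 < C ∧ 0 < ρ ∧ ∃ n₀ : ℕ,
      ∀ ξ : Fin m → ℤ, (n₀ : ℝ) ≤ Real.sqrt (∑ k, ((ξ k : ℝ)) ^ 2) →
        Real.sqrt (∑ l, ∑ p,
            ((ξ (j l p) : ℝ) + ∑ q, v l p q * (ξ (i l q) : ℝ)) ^ 2) ≥
          C * (1 + ∑ k, ((ξ k : ℝ)) ^ 2) ^ (-ρ)) ↔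
    (∃ B M : ℝ, 0 < B ∧ 0 < M ∧
      ∀ ξ : Fin m → ℤ, ξ ≠ 0 →
        ∃ (l : Fin N) (p : Fin (ml l)),
          |(ξ (j l p) : ℝ) + ∑ q, v l p q * (ξ (i l q) : ℝ)| ≥
            B * (1 + Real.sqrt (∑ q, ((ξ (i l q) : ℝ)) ^ 2)) ^ (-M)) :=
  diophantine_conditions_equivalent_general m N hN ml dl hml j i hj hi hcompl v
end

section
/- Let D(t,γ) = (∑_{p=1}^{m'} α_p(t) γ_p)², where α_1,…,α_{m'} ∈ C^∞(T;ℝ) are linearly independent over ℝ and T is a compact Riemannian manifold. Then there exist constants a, δ > 0 such that for every γ ∈ ℝ^{m'} with |γ| = 1 there is a nonempty open set A_γ ⊂ T with vol(A_γ) ≥ δ and D(t,γ) > a for all t ∈ A_γ. -/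
open MeasureTheory
open scoped ENNReal

/-!
For each unit vector `γ₀` linear independence gives a point `t₀` with `D(t₀, γ₀) > 0`, and
continuity of `D` jointly in `(γ, t)` gives a box `U × V` around `(γ₀, t₀)` on which `D` stays
above `D(t₀, γ₀) / 2`; the open set `V` then serves every `γ ∈ U`. Compactness of the sphere
reduces to finitely many such boxes, and `a`, `δ` are the minima of their constants and volumes.
-/

def UniformlyPosOnOpen {X T : Type*} [TopologicalSpace T] [MeasurableSpace T]
    (μ : Measure T) (g : X → T → ℝ) (s : Set X) : Prop :=
  ∃ a > (0 : ℝ), ∃ δ > (0 : ℝ≥0∞), ∀ x ∈ s,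
    ∃ A : Set T, IsOpen A ∧ A.Nonempty ∧ δ ≤ μ A ∧ ∀ t ∈ A, a < g x t

theorem IsCompact.uniformlyPosOnOpen {X T : Type*} [TopologicalSpace X]
    [TopologicalSpace T] [MeasurableSpace T] (μ : Measure T) [μ.IsOpenPosMeasure]
    {K : Set X} (hK : IsCompact K) {g : X → T → ℝ} (hg : Continuous (Function.uncurry g))
    (hpos : ∀ x ∈ K, ∃ t, 0 < g x t) : UniformlyPosOnOpen μ g K := by
  refine hK.induction_on ⟨1, one_pos, 1, one_pos, by simp⟩ ?_ ?_ ?_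
  · rintro s s' hss' ⟨a, ha, δ, hδ, hA⟩
    exact ⟨a, ha, δ, hδ, fun x hx => hA x (hss' hx)⟩
  · rintro s s' ⟨a, ha, δ, hδ, hA⟩ ⟨a', ha', δ', hδ', hA'⟩
    refine ⟨min a a', lt_min ha ha', min δ δ', lt_min hδ hδ', ?_⟩
    rintro x (hx | hx)
    · obtain ⟨A, hAo, hAne, hδA, hgA⟩ := hA x hx
      exact ⟨A, hAo, hAne, (min_le_left _ _).trans hδA,
        fun t ht => (min_le_left _ _).trans_lt (hgA t ht)⟩
    · obtain ⟨A, hAo, hAne, hδA, hgA⟩ := hA' x hx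
      exact ⟨A, hAo, hAne, (min_le_right _ _).trans hδA,
        fun t ht => (min_le_right _ _).trans_lt (hgA t ht)⟩
  · intro x hx
    obtain ⟨t₀, ht₀⟩ := hpos x hx
    have hbox : IsOpen {q : X × T | g x t₀ / 2 < Function.uncurry g q} :=
      isOpen_lt continuous_const hg
    obtain ⟨U, V, hUo, hVo, hxU, ht₀V, hUV⟩ :=
      isOpen_prod_iff.mp hbox x t₀ (half_lt_self ht₀)
    refine ⟨U, mem_nhdsWithin_of_mem_nhds (hUo.mem_nhds hxU), g x t₀ / 2, half_pos ht₀,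
      μ V, hVo.measure_pos μ ⟨t₀, ht₀V⟩, fun x' hx' => ?_⟩
    exact ⟨V, hVo, ⟨t₀, ht₀V⟩, le_rfl, fun t ht => hUV (Set.mk_mem_prod hx' ht)⟩

theorem isCompact_sum_sq_eq_one (ι : Type*) [Fintype ι] :
    IsCompact {γ : ι → ℝ | ∑ p, γ p ^ 2 = 1} := by
  refine (isCompact_univ_pi fun _ => isCompact_Icc (a := -1) (b := 1)).of_isClosed_subset
    (isClosed_eq (by fun_prop) continuous_const) fun γ hγ p _ => ?_
  have hle : γ p ^ 2 ≤ 1 :=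
    hγ ▸ Finset.single_le_sum (fun q _ => sq_nonneg (γ q)) (Finset.mem_univ p)
  exact abs_le.mp (sq_le_one_iff_abs_le_one _ |>.mp hle)

theorem LinearIndependent.exists_sum_mul_ne_zero {ι T R : Type*} [Fintype ι] [CommRing R]
    {α : ι → T → R} (hα : LinearIndependent R α) {γ : ι → R} (hγ : γ ≠ 0) :
    ∃ t, ∑ p, α p t * γ p ≠ 0 := by
  by_contra! h
  refine hγ (funext (Fintype.linearIndependent_iff.mp hα γ (funext fun t => ?_)))
  simpa [mul_comm] using h t

theorem uniform_positivity_on_open_sets_general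
    {T : Type*} [TopologicalSpace T]
    [MeasurableSpace T]
    (vol : Measure T) [IsFiniteMeasure vol] [vol.IsOpenPosMeasure]
    (m' : ℕ)
    (α : Fin m' → T → ℝ)
    (hcont : ∀ p, Continuous (α p))
    (hindep : LinearIndependent ℝ α) :
    ∃ a δ : ℝ, 0 < a ∧ 0 < δ ∧
      ∀ γ : Fin m' → ℝ, ∑ p, (γ p) ^ 2 = 1 →
        ∃ A : Set T, IsOpen A ∧ A.Nonempty ∧ δ ≤ (vol A).toReal ∧
          ∀ t ∈ A, a < (∑ p, α p t * γ p) ^ 2 := by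
  have hD : Continuous (Function.uncurry fun (γ : Fin m' → ℝ) t => (∑ p, α p t * γ p) ^ 2) := by
    fun_prop
  have hpos (γ : Fin m' → ℝ) (hγ : ∑ p, γ p ^ 2 = 1) : ∃ t, 0 < (∑ p, α p t * γ p) ^ 2 := by
    have hγ0 : γ ≠ 0 := by rintro rfl; simp at hγ
    obtain ⟨t, ht⟩ := hindep.exists_sum_mul_ne_zero hγ0
    exact ⟨t, sq_pos_of_ne_zero ht⟩
  obtain ⟨a, ha, δ, hδ, hA⟩ := (isCompact_sum_sq_eq_one (Fin m')).uniformlyPosOnOpen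
    vol hD hpos
  refine ⟨a, (min δ 1).toReal, ha,
    ENNReal.toReal_pos (lt_min hδ one_pos).ne' (min_lt_of_right_lt ENNReal.one_lt_top).ne,
    fun γ hγ => ?_⟩
  obtain ⟨A, hAo, hAne, hδA, hgA⟩ := hA γ hγ
  exact ⟨A, hAo, hAne, ENNReal.toReal_mono (measure_ne_top vol A) ((min_le_left _ _).trans hδA),
    hgA⟩

theorem uniform_positivity_on_open_sets
    {T : Type*} [TopologicalSpace T] [CompactSpace T]
    [MeasurableSpace T] [BorelSpace T]
    (vol : Measure T) [IsFiniteMeasure vol] [vol.IsOpenPosMeasure]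
    (m' : ℕ) (hm' : 0 < m')
    (α : Fin m' → T → ℝ)
    (hcont : ∀ p, Continuous (α p))
    (hindep : LinearIndependent ℝ α) :
    ∃ a δ : ℝ, 0 < a ∧ 0 < δ ∧
      ∀ γ : Fin m' → ℝ, ∑ p, (γ p) ^ 2 = 1 →
        ∃ A : Set T, IsOpen A ∧ A.Nonempty ∧ δ ≤ (vol A).toReal ∧
          ∀ t ∈ A, a < (∑ p, α p t * γ p) ^ 2 :=
  uniform_positivity_on_open_sets_general vol m' α hcont hindep
end
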